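/- Chain of inequalities used in the uniqueness proof: if M, M0 are PSD matrices satisfying A(M) = A(M0), Y2 = A* lambda + xi with <xi, M - M0> = 0, (Y2)_T = I_T (projections onto tangent space T of M0 agree with identity), and (Y2)_{T-perp} < I_{T-perp} strictly on T-perp, then Tr(M0) = Tr(M_T) + <(Y2)_{T-perp}, M> < Tr(M) whenever M_{T-perp} is nonzero. -/

import Mathlib

/-!
Let `P` be the orthogonal projector onto `m0` and `Q = 1 - P`, so that `X_T = PX + XP - PXP` and
`X - X_T = QXQ`. The dual certificate gives `⟨Y2, M⟩ = ⟨Y2, M0⟩`; since `(Y2)_T = P` we have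
`Y2 = P + Q Y2 Q`, and `QM0 = 0`, so `⟨Y2, M0⟩ = Tr M0`, which yields the identity.
For the inequality, `Tr M - Tr M0 = ⟨1 - Y2, M⟩ = ⟨1 - Y2, QMQ⟩` because `1 - Y2 = Q(1 - Y2)Q`.
Writing `M = BᵀB`, the last quantity is `∑ᵢ cᵢ ⬝ (1 - Y2) cᵢ` over the rows `cᵢ` of `BQ`, all
orthogonal to `m0`, and some `cᵢ` is nonzero as soon as `QMQ ≠ 0`.
-/

open scoped Matrix

/-- The Frobenius inner product of two real matrices. -/
def frob {N : ℕ} (A B : Matrix (Fin N) (Fin N) ℝ) : ℝ :=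
  ∑ i, ∑ j, A i j * B i j

/-- Orthogonal projection (in the Frobenius inner product) onto the tangent space
`T = {m0 vᵀ + v m0ᵀ : v}` at the rank-one matrix `m0 m0ᵀ`. -/
noncomputable def projT (N : ℕ) (m0 : Fin N → ℝ)
    (X : Matrix (Fin N) (Fin N) ℝ) : Matrix (Fin N) (Fin N) ℝ :=
  let P := (1 / (∑ i, (m0 i) ^ 2)) • Matrix.vecMulVec m0 m0
  P * X + X * P - P * X * P

section Frobenius

variable {N : ℕ}

theorem frob_eq_trace (A B : Matrix (Fin N) (Fin N) ℝ) : frob A B = (Aᵀ * B).trace := by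
  simp only [frob, Matrix.trace, Matrix.diag, Matrix.mul_apply, Matrix.transpose_apply]
  exact Finset.sum_comm

theorem frob_sub_left (A B C : Matrix (Fin N) (Fin N) ℝ) :
    frob (A - B) C = frob A C - frob B C := by
  simp only [frob_eq_trace, Matrix.transpose_sub, Matrix.sub_mul, Matrix.trace_sub]

theorem frob_sub_right (A B C : Matrix (Fin N) (Fin N) ℝ) :
    frob A (B - C) = frob A B - frob A C := by
  simp only [frob_eq_trace, Matrix.mul_sub, Matrix.trace_sub]

theorem frob_one_left (M : Matrix (Fin N) (Fin N) ℝ) : frob 1 M = M.trace := by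
  simp [frob_eq_trace]

theorem frob_conj_left {Q : Matrix (Fin N) (Fin N) ℝ} (hQ : Qᵀ = Q)
    (X W : Matrix (Fin N) (Fin N) ℝ) : frob (Q * X * Q) W = frob X (Q * W * Q) := by
  rw [frob_eq_trace, frob_eq_trace, Matrix.transpose_mul, Matrix.transpose_mul, hQ,
    Matrix.mul_assoc, Matrix.trace_mul_comm Q, Matrix.mul_assoc, Matrix.mul_assoc,
    Matrix.mul_assoc]

theorem frob_transpose_mul_self (Z C : Matrix (Fin N) (Fin N) ℝ) :
    frob Z (Cᵀ * C) = ∑ i, C i ⬝ᵥ Z *ᵥ C i := by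
  rw [frob_eq_trace, ← Matrix.mul_assoc, Matrix.trace_mul_comm, ← Matrix.mul_assoc]
  refine Finset.sum_congr rfl fun i _ => ?_
  rw [Matrix.diag_apply, Matrix.mul_mul_apply, Matrix.transpose_transpose, Matrix.mulVec_transpose,
    dotProduct_comm, ← Matrix.dotProduct_mulVec]

theorem frob_transpose_mul_self_pos {Z C : Matrix (Fin N) (Fin N) ℝ} (hC : C ≠ 0)
    (hZ : ∀ i, C i ≠ 0 → 0 < C i ⬝ᵥ Z *ᵥ C i) : 0 < frob Z (Cᵀ * C) := by
  obtain ⟨i, hi⟩ := Function.ne_iff.mp hC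
  rw [frob_transpose_mul_self]
  refine Finset.sum_pos' (fun j _ => ?_) ⟨i, Finset.mem_univ i, hZ i hi⟩
  rcases eq_or_ne (C j) 0 with h | h
  · simp [h]
  · exact (hZ j h).le

open scoped MatrixOrder in
theorem frob_conj_pos_of_posSemidef {Z Q M : Matrix (Fin N) (Fin N) ℝ} (hM : M.PosSemidef)
    (hQ : Qᵀ = Q) (hQMQ : Q * M * Q ≠ 0)
    (hZ : ∀ w, w ᵥ* Q ≠ 0 → 0 < (w ᵥ* Q) ⬝ᵥ Z *ᵥ (w ᵥ* Q)) : 0 < frob Z (Q * M * Q) := by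
  obtain ⟨B, rfl⟩ := CStarAlgebra.nonneg_iff_eq_star_mul_self.mp hM.nonneg
  have hBQ : Q * (star B * B) * Q = (B * Q)ᵀ * (B * Q) := by
    rw [Matrix.transpose_mul, hQ, Matrix.star_eq_conjTranspose,
      Matrix.conjTranspose_eq_transpose_of_trivial]
    noncomm_ring
  rw [hBQ] at hQMQ ⊢
  exact frob_transpose_mul_self_pos (fun h => hQMQ (by rw [h]; simp)) fun i => hZ (B i)

theorem frob_eq_of_dual_certificate {m : ℕ} {A : Matrix (Fin N) (Fin N) ℝ →ₗ[ℝ] (Fin m → ℝ)}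
    {M M0 Y ξ : Matrix (Fin N) (Fin N) ℝ} {lam : Fin m → ℝ} (hA : A M = A M0)
    (hY : ∀ W, frob (Y - ξ) W = lam ⬝ᵥ A W) (hξ : frob ξ (M - M0) = 0) :
    frob Y M = frob Y M0 := by
  have h := hY (M - M0)
  rw [map_sub, hA, sub_self, dotProduct_zero, frob_sub_left, hξ, frob_sub_right] at h
  linarith

end Frobenius

section TangentProjection

variable {R : Type*} [Ring R]

def tangentProj (P X : R) : R := P * X + X * P - P * X * P

theorem sub_tangentProj (P X : R) : X - tangentProj P X = (1 - P) * X * (1 - P) := by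
  unfold tangentProj
  noncomm_ring

theorem tangentProj_sub (P X Y : R) :
    tangentProj P (X - Y) = tangentProj P X - tangentProj P Y := by
  unfold tangentProj
  noncomm_ring

theorem tangentProj_one {P : R} (hP : IsIdempotentElem P) : tangentProj P 1 = P := by
  rw [tangentProj, mul_one, one_mul, hP.eq]
  abel

end TangentProjection

theorem trace_tangentProj {n R : Type*} [Fintype n] [DecidableEq n] [CommRing R]
    {P : Matrix n n R} (hP : IsIdempotentElem P) (X : Matrix n n R) :
    (tangentProj P X).trace = (P * X).trace := by
  rw [tangentProj, Matrix.trace_sub, Matrix.trace_add, Matrix.trace_mul_comm X P,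
    Matrix.trace_mul_cycle, hP.eq]
  ring

theorem trace_eq_frob_of_tangentProj_eq {N : ℕ} {P Y M0 : Matrix (Fin N) (Fin N) ℝ}
    (hPt : Pᵀ = P) (hPM0 : P * M0 = M0) (hY : tangentProj P Y = P) :
    M0.trace = frob Y M0 := by
  have hQY : Y - P = (1 - P) * Y * (1 - P) := by simpa only [hY] using sub_tangentProj P Y
  have hQt : (1 - P)ᵀ = 1 - P := by rw [Matrix.transpose_sub, Matrix.transpose_one, hPt]
  have hQM0 : (1 - P) * M0 * (1 - P) = 0 := by
    rw [Matrix.sub_mul, Matrix.one_mul, hPM0, sub_self, Matrix.zero_mul]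
  calc M0.trace = frob P M0 + frob (Y - P) M0 := by
        rw [hQY, frob_conj_left hQt, hQM0, frob_eq_trace, frob_eq_trace, hPt, hPM0]
        simp
    _ = frob Y M0 := by rw [frob_sub_left]; ring

section RankOne

variable {n : Type*} [Fintype n]

-- At `v = 0` the factor is `1 / 0 = 0`, so this is the zero matrix.
noncomputable def rankOneProj (v : n → ℝ) : Matrix n n ℝ :=
  (1 / ∑ i, v i ^ 2) • Matrix.vecMulVec v v

theorem rankOneProj_transpose (v : n → ℝ) : (rankOneProj v)ᵀ = rankOneProj v := by
  simp [rankOneProj]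

theorem rankOneProj_mulVec_self (v : n → ℝ) : rankOneProj v *ᵥ v = v := by
  have hs : ∑ i, v i ^ 2 = v ⬝ᵥ v := by simp [dotProduct, sq]
  rcases eq_or_ne (v ⬝ᵥ v) 0 with h | h
  · simp [dotProduct_self_eq_zero.mp h]
  · simp [rankOneProj, Matrix.smul_mulVec, Matrix.vecMulVec_mulVec, hs, smul_smul, h]

theorem rankOneProj_mul_vecMulVec_self (v : n → ℝ) :
    rankOneProj v * Matrix.vecMulVec v v = Matrix.vecMulVec v v := by
  rw [Matrix.mul_vecMulVec, rankOneProj_mulVec_self]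

theorem isIdempotentElem_rankOneProj (v : n → ℝ) : IsIdempotentElem (rankOneProj v) := by
  unfold IsIdempotentElem
  conv_lhs => enter [2]; rw [rankOneProj]
  rw [Matrix.mul_smul, rankOneProj_mul_vecMulVec_self, rankOneProj]

theorem dotProduct_vecMul_one_sub_rankOneProj [DecidableEq n] (v w : n → ℝ) :
    v ⬝ᵥ (w ᵥ* (1 - rankOneProj v)) = 0 := by
  rw [dotProduct_comm, ← Matrix.dotProduct_mulVec, Matrix.sub_mulVec, Matrix.one_mulVec,
    rankOneProj_mulVec_self, sub_self, dotProduct_zero]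

end RankOne

theorem projT_eq_tangentProj (N : ℕ) (m0 : Fin N → ℝ) (X : Matrix (Fin N) (Fin N) ℝ) :
    projT N m0 X = tangentProj (rankOneProj m0) X :=
  rfl

theorem trace_chain_inequality_general (N m : ℕ) (m0 : Fin N → ℝ)
    (A : Matrix (Fin N) (Fin N) ℝ →ₗ[ℝ] (Fin m → ℝ))
    (M M0 Y2 : Matrix (Fin N) (Fin N) ℝ)
    (hM0 : M0 = Matrix.vecMulVec m0 m0)
    (hM : M.PosSemidef)
    (hA : A M = A M0)
    (hY2 : ∃ (lam : Fin m → ℝ) (ξ : Matrix (Fin N) (Fin N) ℝ),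
      (∀ W : Matrix (Fin N) (Fin N) ℝ, frob (Y2 - ξ) W = lam ⬝ᵥ A W) ∧
      frob ξ (M - M0) = 0)
    (hT : projT N m0 Y2 = projT N m0 1)
    (hstrict : ∀ v : Fin N → ℝ, v ≠ 0 → (∑ i, m0 i * v i) = 0 →
      0 < v ⬝ᵥ ((1 - Y2).mulVec v)) :
    M0.trace = (projT N m0 M).trace + frob (Y2 - projT N m0 Y2) M ∧
    (M - projT N m0 M ≠ 0 → M0.trace < M.trace) := by
  obtain ⟨lam, ξ, hYA, hξ⟩ := hY2
  simp only [projT_eq_tangentProj] at hT ⊢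
  set P := rankOneProj m0
  have hPt : Pᵀ = P := rankOneProj_transpose m0
  have hQt : (1 - P)ᵀ = 1 - P := by rw [Matrix.transpose_sub, Matrix.transpose_one, hPt]
  have hP : IsIdempotentElem P := isIdempotentElem_rankOneProj m0
  have hY2P : tangentProj P Y2 = P := hT.trans (tangentProj_one hP)
  have htrM0 : M0.trace = frob Y2 M := by
    rw [frob_eq_of_dual_certificate hA hYA hξ]
    exact trace_eq_frob_of_tangentProj_eq hPt (hM0 ▸ rankOneProj_mul_vecMulVec_self m0) hY2P
  refine ⟨?_, fun hne => ?_⟩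
  · rw [htrM0, hY2P, trace_tangentProj hP, frob_sub_left, frob_eq_trace P, hPt]
    ring
  · have hQ : 1 - Y2 = (1 - P) * (1 - Y2) * (1 - P) := by
      rw [← sub_tangentProj, tangentProj_sub, tangentProj_one hP, hY2P, sub_self, sub_zero]
    have hpos : 0 < frob (1 - Y2) M := by
      rw [hQ, frob_conj_left hQt]
      refine frob_conj_pos_of_posSemidef hM hQt (sub_tangentProj P M ▸ hne) fun w hw => ?_
      exact hstrict _ hw (dotProduct_vecMul_one_sub_rankOneProj m0 w)
    rw [frob_sub_left, frob_one_left, ← htrM0] at hpos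
    linarith

/-- Chain of inequalities used in the uniqueness proof: if `M, M0` are PSD with
`A(M) = A(M0)`, `Y2 = A*λ + ξ` with `⟨ξ, M - M0⟩ = 0`, `(Y2)_T = I_T`, and
`I - Y2` is strictly positive on the complement, then
`Tr(M0) = Tr(M_T) + ⟨(Y2)_{T⊥}, M⟩`, and `Tr(M0) < Tr(M)` whenever `M_{T⊥} ≠ 0`. -/
theorem trace_chain_inequality (N m : ℕ) (m0 : Fin N → ℝ)
    (A : Matrix (Fin N) (Fin N) ℝ →ₗ[ℝ] (Fin m → ℝ))
    (M M0 Y2 : Matrix (Fin N) (Fin N) ℝ)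
    (hM0 : M0 = Matrix.vecMulVec m0 m0)
    (hM : M.PosSemidef) (hM0psd : M0.PosSemidef)
    (hA : A M = A M0)
    (hY2 : ∃ (lam : Fin m → ℝ) (ξ : Matrix (Fin N) (Fin N) ℝ),
      (∀ W : Matrix (Fin N) (Fin N) ℝ, frob (Y2 - ξ) W = lam ⬝ᵥ A W) ∧
      frob ξ (M - M0) = 0)
    (hT : projT N m0 Y2 = projT N m0 1)
    (hstrict : ∀ v : Fin N → ℝ, v ≠ 0 → (∑ i, m0 i * v i) = 0 →
      0 < v ⬝ᵥ ((1 - Y2).mulVec v)) :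
    M0.trace = (projT N m0 M).trace + frob (Y2 - projT N m0 Y2) M ∧
    (M - projT N m0 M ≠ 0 → M0.trace < M.trace) :=
  trace_chain_inequality_general N m m0 A M M0 Y2 hM0 hM hA hY2 hT hstrict
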